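/- The measured impedance admits the representation Z₀(ω) = ρ₀ + ∫₀^T K(s)·( e^{−iωs} − (ωs e^{−iωs} − sin(ωs))/(2πn) ) ds. -/

import Mathlib

/-!
Expanding `U`, the instantaneous part contributes `ρ₀`, since
`∫₀^T sin(ωt) e^{-iωt} dt = T/(2i)`. For the memory part, Fubini on the triangle
`0 ≤ s ≤ t ≤ T` gives `∫₀^T K(s) ∫ₛ^T sin(ω(t-s)) e^{-iωt} dt ds`. Writing the sine through
exponentials, the inner integrand is `(e^{-iωs} - e^{iωs} e^{-2iωt})/(2i)`; because `T` is a whole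
number of periods, `e^{-2iωT} = 1`, so the oscillating part only leaves the boundary term
`sin(ωs)/ω` and the inner integral is `(e^{-iωs}(T-s) + sin(ωs)/ω)/(2i)`.
-/

open Real Complex MeasureTheory intervalIntegral Set Function

section TriangleFubini

variable {E : Type*} [NormedAddCommGroup E] [NormedSpace ℝ E] {a b : ℝ} {f : ℝ → ℝ → E}

lemma setIntegral_Ioc_indicator_snd_le {t : ℝ} (ht : t ∈ Ioc a b) :
    ∫ s in Ioc a b, {p : ℝ × ℝ | p.2 ≤ p.1}.indicator (uncurry f) (t, s) = ∫ s in a..t, f t s := by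
  have hslice : (fun s => {p : ℝ × ℝ | p.2 ≤ p.1}.indicator (uncurry f) (t, s)) =
      (Iic t).indicator (f t) := by
    ext s; by_cases h : s ≤ t <;> simp [h]
  rw [hslice, setIntegral_indicator measurableSet_Iic, Ioc_inter_Iic, min_eq_right ht.2,
    integral_of_le ht.1.le]

lemma setIntegral_Ioc_indicator_le_fst {s : ℝ} (hs : s ∈ Ioc a b) :
    ∫ t in Ioc a b, {p : ℝ × ℝ | p.2 ≤ p.1}.indicator (uncurry f) (t, s) = ∫ t in s..b, f t s := by
  have hslice : (fun t => {p : ℝ × ℝ | p.2 ≤ p.1}.indicator (uncurry f) (t, s)) =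
      (Ici s).indicator (fun t => f t s) := by
    ext t; by_cases h : s ≤ t <;> simp [h]
  have hIcc : Ioc a b ∩ Ici s = Icc s b := by
    ext t; simp only [mem_inter_iff, mem_Ioc, mem_Ici, mem_Icc]; grind
  rw [hslice, setIntegral_indicator measurableSet_Ici, hIcc, integral_Icc_eq_integral_Ioc,
    integral_of_le hs.2]

theorem integral_integral_triangle_swap (hab : a ≤ b)
    (hf : Integrable (uncurry f) ((volume.restrict (Ioc a b)).prod (volume.restrict (Ioc a b)))) :
    ∫ t in a..b, ∫ s in a..t, f t s = ∫ s in a..b, ∫ t in s..b, f t s := by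
  rw [integral_of_le hab, integral_of_le hab,
    ← setIntegral_congr_fun measurableSet_Ioc fun _ => setIntegral_Ioc_indicator_snd_le,
    ← setIntegral_congr_fun measurableSet_Ioc fun _ => setIntegral_Ioc_indicator_le_fst]
  exact integral_integral_swap (hf.indicator (measurableSet_le measurable_snd measurable_fst))

theorem intervalIntegrable_integral_triangle (hab : a ≤ b)
    (hf : Integrable (uncurry f) ((volume.restrict (Ioc a b)).prod (volume.restrict (Ioc a b)))) :
    IntervalIntegrable (fun t => ∫ s in a..t, f t s) volume a b := by
  rw [intervalIntegrable_iff_integrableOn_Ioc_of_le hab]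
  exact (hf.indicator (measurableSet_le measurable_snd measurable_fst)).integral_prod_left.congr
    ((ae_restrict_iff' measurableSet_Ioc).2 (.of_forall fun _ => setIntegral_Ioc_indicator_snd_le))

end TriangleFubini

lemma two_I_mul_sin_mul_exp (ω s t : ℝ) :
    2 * I * Real.sin (ω * (t - s)) * exp (-I * ω * t) =
      exp (-I * ω * s) - exp (I * ω * s) * exp (-2 * I * ω * t) := by
  have h₁ : exp (↑(ω * (t - s)) * I) * exp (-I * ω * t) = exp (-I * ω * s) := by
    rw [← Complex.exp_add]; congr 1; push_cast; ring
  have h₂ : exp (-↑(ω * (t - s)) * I) * exp (-I * ω * t) =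
      exp (I * ω * s) * exp (-2 * I * ω * t) := by
    simp only [← Complex.exp_add]; congr 1; push_cast; ring
  rw [ofReal_sin, Complex.sin]
  linear_combination (exp (-↑(ω * (t - s)) * I) - exp (↑(ω * (t - s)) * I)) *
    exp (-I * ω * t) * I_sq + h₁ - h₂

theorem exp_neg_two_I_mul_eq_one {ω T : ℝ} {n : ℤ} (h : ω * T = 2 * π * n) :
    exp (-2 * I * ω * T) = 1 := by
  have hc : (ω : ℂ) * T = 2 * π * n := by exact_mod_cast congrArg ofReal h
  rw [show -2 * I * ω * T = (-2 * n : ℤ) * (2 * π * I) by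
    push_cast; linear_combination (-2 * I) * hc]
  exact exp_int_mul_two_pi_mul_I _

theorem integral_sin_mul_exp_neg_I {ω T : ℝ} (hω : ω ≠ 0) (hT : exp (-2 * I * ω * T) = 1)
    (s : ℝ) :
    ∫ t in s..T, (Real.sin (ω * (t - s)) : ℂ) * exp (-I * ω * t) =
      (exp (-I * ω * s) * (T - s) + Real.sin (ω * s) / ω) / (2 * I) := by
  have hc : -2 * I * ω ≠ 0 := by simp [hω]
  have hsin : exp (I * ω * s) - exp (-I * ω * s) = 2 * I * Real.sin (ω * s) := by
    have h := two_I_mul_sin_mul_exp ω s 0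
    simp only [zero_sub, mul_neg, Real.sin_neg, ofReal_neg, ofReal_zero, mul_zero,
      Complex.exp_zero, mul_one] at h
    linear_combination h
  rw [eq_div_iff (by simp), mul_comm, ← intervalIntegral.integral_const_mul]
  simp_rw [← mul_assoc, two_I_mul_sin_mul_exp]
  rw [integral_sub intervalIntegrable_const (Continuous.intervalIntegrable (by fun_prop) _ _),
    intervalIntegral.integral_const, intervalIntegral.integral_const_mul,
    integral_exp_mul_complex hc, hT, real_smul]
  have he : exp (I * ω * s) * exp (-2 * I * ω * s) = exp (-I * ω * s) := by
    rw [← Complex.exp_add]; ring_nf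
  have hboundary : exp (I * ω * s) * ((1 - exp (-2 * I * ω * s)) / (-2 * I * ω)) =
      -(Real.sin (ω * s) / ω) := by
    rw [mul_div_assoc', mul_sub, mul_one, he, hsin]
    field_simp
  rw [hboundary]
  push_cast
  ring

section Volterra

variable {ω T : ℝ} {K : ℝ → ℝ}

lemma integrable_ofReal_mul_sin_mul_exp_prod {a b : ℝ} (hK : IntegrableOn K (Ioc a b)) :
    Integrable (uncurry fun t s => (K s : ℂ) * (Real.sin (ω * (t - s)) * exp (-I * ω * t)))
      ((volume.restrict (Ioc a b)).prod (volume.restrict (Ioc a b))) := by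
  refine ((hK.ofReal (𝕜 := ℂ)).comp_snd _).mul_bdd (c := 1)
    (Continuous.aestronglyMeasurable (by fun_prop)) (.of_forall fun p => ?_)
  have hexp : ‖exp (-I * ω * p.1)‖ = 1 := by simp [norm_exp]
  rw [norm_mul, norm_real, Real.norm_eq_abs, hexp, mul_one]
  exact Real.abs_sin_le_one _

lemma ofReal_integral_mul_sin_mul_exp (t : ℝ) :
    ((∫ s in (0 : ℝ)..t, K s * Real.sin (ω * (t - s)) : ℝ) : ℂ) * exp (-I * ω * t) =
      ∫ s in (0 : ℝ)..t, (K s : ℂ) * (Real.sin (ω * (t - s)) * exp (-I * ω * t)) := by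
  rw [← intervalIntegral.integral_ofReal, ← intervalIntegral.integral_mul_const]
  push_cast
  simp only [mul_assoc]

lemma intervalIntegrable_volterra_sin_mul_exp (hT0 : 0 ≤ T) (hK : IntegrableOn K (Ioc 0 T)) :
    IntervalIntegrable
      (fun t => ((∫ s in (0 : ℝ)..t, K s * Real.sin (ω * (t - s)) : ℝ) : ℂ) * exp (-I * ω * t))
      volume 0 T := by
  simp_rw [ofReal_integral_mul_sin_mul_exp]
  exact intervalIntegrable_integral_triangle hT0 (integrable_ofReal_mul_sin_mul_exp_prod hK)

theorem integral_volterra_sin_mul_exp (hω : ω ≠ 0) (hT0 : 0 ≤ T) (hT : exp (-2 * I * ω * T) = 1)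
    (hK : IntegrableOn K (Ioc 0 T)) :
    ∫ t in (0 : ℝ)..T, ((∫ s in (0 : ℝ)..t, K s * Real.sin (ω * (t - s)) : ℝ) : ℂ) *
        exp (-I * ω * t) =
      ∫ s in (0 : ℝ)..T,
        (K s : ℂ) * ((exp (-I * ω * s) * (T - s) + Real.sin (ω * s) / ω) / (2 * I)) := by
  simp_rw [ofReal_integral_mul_sin_mul_exp,
    integral_integral_triangle_swap hT0 (integrable_ofReal_mul_sin_mul_exp_prod hK),
    intervalIntegral.integral_const_mul, integral_sin_mul_exp_neg_I hω hT]

end Volterra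

theorem measured_impedance_representation_general
    (ω : ℝ) (hω : 0 < ω) (n : ℕ) (hn : 0 < n) (T : ℝ) (hT : T = 2 * π * n / ω)
    (ρ₀ : ℝ) (K : ℝ → ℝ)
    (hKint : IntegrableOn K (Set.Icc (0 : ℝ) T))
    (U : ℝ → ℝ)
    (hU : ∀ t, U t = ρ₀ * Real.sin (ω * t) + ∫ s in (0 : ℝ)..t, K s * Real.sin (ω * (t - s)))
    (Z₀ : ℂ)
    (hZ₀ : Z₀ = 2 * Complex.I / (T : ℂ) *
      ∫ t in (0 : ℝ)..T, (U t : ℂ) * Complex.exp (-Complex.I * ω * t)) :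
    Z₀ = (ρ₀ : ℂ) + ∫ s in (0 : ℝ)..T, (K s : ℂ) *
      (Complex.exp (-Complex.I * ω * s) -
        ((ω : ℂ) * s * Complex.exp (-Complex.I * ω * s) - (Real.sin (ω * s) : ℂ)) /
          (2 * (π : ℂ) * n)) := by
  have hT0 : 0 < T := by rw [hT]; positivity
  have hωT : ω * T = 2 * π * n := by rw [hT]; field_simp
  have hper : exp (-2 * I * ω * T) = 1 :=
    exp_neg_two_I_mul_eq_one (n := n) (by exact_mod_cast hωT)
  have hK : IntegrableOn K (Ioc 0 T) := hKint.mono_set Ioc_subset_Icc_self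
  have hsin : ∫ t in (0 : ℝ)..T, (Real.sin (ω * t) : ℂ) * exp (-I * ω * t) = T / (2 * I) := by
    simpa using integral_sin_mul_exp_neg_I hω.ne' hper 0
  have hUexp : ∀ t ∈ uIcc 0 T, (U t : ℂ) * exp (-I * ω * t) =
      ρ₀ * ((Real.sin (ω * t) : ℂ) * exp (-I * ω * t)) +
        ((∫ s in (0 : ℝ)..t, K s * Real.sin (ω * (t - s)) : ℝ) : ℂ) * exp (-I * ω * t) := by
    intro t _
    rw [hU]; push_cast; ring
  rw [hZ₀, integral_congr hUexp, integral_add (Continuous.intervalIntegrable (by fun_prop) _ _)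
      (intervalIntegrable_volterra_sin_mul_exp hT0.le hK), intervalIntegral.integral_const_mul,
    hsin, integral_volterra_sin_mul_exp hω.ne' hT0.le hper hK, mul_add,
    ← intervalIntegral.integral_const_mul]
  have hωTc : (ω : ℂ) * T = 2 * π * n := by exact_mod_cast congrArg ofReal hωT
  have hTc : (T : ℂ) ≠ 0 := ofReal_ne_zero.2 hT0.ne'
  have hωc : (ω : ℂ) ≠ 0 := ofReal_ne_zero.2 hω.ne'
  congr 1
  · field_simp
  · refine integral_congr fun s _ => ?_
    rw [← hωTc]
    field_simp
    ring

/-- **Representation of the measured impedance.**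
`Z₀(ω) = ρ₀ + ∫₀^T K(s) (e^{-iωs} - (ωs e^{-iωs} - sin ωs)/(2πn)) ds`. -/
theorem measured_impedance_representation
    (ω : ℝ) (hω : 0 < ω) (n : ℕ) (hn : 0 < n) (T : ℝ) (hT : T = 2 * π * n / ω)
    (ρ₀ : ℝ) (K : ℝ → ℝ) (hKmeas : Measurable K)
    (hKint : IntegrableOn K (Set.Icc (0 : ℝ) T))
    (U : ℝ → ℝ)
    (hU : ∀ t, U t = ρ₀ * Real.sin (ω * t) + ∫ s in (0 : ℝ)..t, K s * Real.sin (ω * (t - s)))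
    (Z₀ : ℂ)
    (hZ₀ : Z₀ = 2 * Complex.I / (T : ℂ) *
      ∫ t in (0 : ℝ)..T, (U t : ℂ) * Complex.exp (-Complex.I * ω * t)) :
    Z₀ = (ρ₀ : ℂ) + ∫ s in (0 : ℝ)..T, (K s : ℂ) *
      (Complex.exp (-Complex.I * ω * s) -
        ((ω : ℂ) * s * Complex.exp (-Complex.I * ω * s) - (Real.sin (ω * s) : ℂ)) /
          (2 * (π : ℂ) * n)) :=
  measured_impedance_representation_general ω hω n hn T hT ρ₀ K hKint U hU Z₀ hZ₀
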